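/- arXiv:0807.1592 — 3 statements merged into one kernel-verified Lean document; each statement's English description precedes it below -/
import Mathlib

section
/- If γ : [0,1] → ℝ^k is a Lipschitz curve that is injective (simple), then equality |T^γ|(ℝ^k) = L_γ holds, and moreover the total variation measure |T^γ| equals the pushforward of the measure ‖γ'(s)‖ ds on [0,1] under γ. -/
/-! For `‖g‖ ≤ 1` the pairing `⟪g (γ s), γ' s⟫` is at most `‖γ' s‖` pointwise, so every
competitor is bounded by the (weighted) length. The bound is attained by a field `g` with
`g (γ s) = γ' s / ‖γ' s‖`: a continuous injective map on `[0,1]` is a Borel isomorphism onto its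
image (Lusin–Souslin), so the unit tangent, a Borel function of `s`, is a Borel function of the
point `γ s` and extends to the whole space. On a Borel set `A` the supremum is thus
`∫_{γ⁻¹ A} ‖γ'‖`, which is the pushforward measure of `A`. -/

open MeasureTheory Set

open scoped InnerProductSpace

lemma abs_real_inner_le_norm_of_norm_le_one {E : Type*} [NormedAddCommGroup E]
    [InnerProductSpace ℝ E] {x y : E} (hx : ‖x‖ ≤ 1) : |⟪x, y⟫_ℝ| ≤ ‖y‖ :=
  (abs_real_inner_le_norm x y).trans (mul_le_of_le_one_left (norm_nonneg y) hx)

lemma norm_inv_smul_self_le_one {E : Type*} [NormedAddCommGroup E] [NormedSpace ℝ E] (v : E) :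
    ‖‖v‖⁻¹ • v‖ ≤ 1 := by
  rw [norm_smul, norm_inv, norm_norm]
  exact inv_mul_le_one

lemma real_inner_inv_smul_self {E : Type*} [NormedAddCommGroup E] [InnerProductSpace ℝ E]
    (v : E) : ⟪‖v‖⁻¹ • v, v⟫_ℝ = ‖v‖ := by
  rw [real_inner_smul_left, real_inner_self_eq_norm_sq]
  rcases eq_or_ne ‖v‖ 0 with h | h
  · simp [h]
  · field_simp

section UnitField

variable {α F E : Type*} [TopologicalSpace α] [PolishSpace α] [MeasurableSpace α] [BorelSpace α]
  [TopologicalSpace F] [T2Space F] [MeasurableSpace F] [BorelSpace F]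
  [NormedAddCommGroup E] [MeasurableSpace E] [BorelSpace E]

lemma exists_measurable_norm_le_one_comp_eq {γ : α → F} {s : Set α} (hs : MeasurableSet s)
    (hγ : ContinuousOn γ s) (hinj : InjOn γ s) {u : α → E} (hu : Measurable u)
    (hu1 : ∀ t ∈ s, ‖u t‖ ≤ 1) :
    ∃ g : F → E, Measurable g ∧ (∀ x, ‖g x‖ ≤ 1) ∧ ∀ t ∈ s, g (γ t) = u t := by
  obtain ⟨g, hg, hgγ⟩ := (hγ.measurableEmbedding hs hinj).exists_measurable_extend
    (hu.comp measurable_subtype_coe) fun _ => ⟨0⟩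
  refine ⟨fun x => if ‖g x‖ ≤ 1 then g x else 0,
    hg.ite (measurableSet_le hg.norm measurable_const) measurable_const, fun x => ?_,
    fun t ht => ?_⟩
  · dsimp only
    split_ifs with h
    · exact h
    · simp
  · have h : g (γ t) = u t := congrFun hgγ ⟨t, ht⟩
    simp [h, hu1 t ht]

variable [InnerProductSpace ℝ E] [SecondCountableTopology E]

lemma exists_measurable_unit_field_along {γ : α → F} {s : Set α} (hs : MeasurableSet s)
    (hγ : ContinuousOn γ s) (hinj : InjOn γ s) {v : α → E} (hv : Measurable v) :
    ∃ g : F → E, Measurable g ∧ (∀ x, ‖g x‖ ≤ 1) ∧ ∀ t ∈ s, ⟪g (γ t), v t⟫_ℝ = ‖v t‖ := by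
  obtain ⟨g, hg, hg1, hgγ⟩ := exists_measurable_norm_le_one_comp_eq hs hγ hinj
    (u := fun t => ‖v t‖⁻¹ • v t) (hv.norm.inv.smul hv) fun t _ => norm_inv_smul_self_le_one (v t)
  exact ⟨g, hg, hg1, fun t ht => by rw [hgγ t ht, real_inner_inv_smul_self]⟩

end UnitField

variable {F E : Type*} [TopologicalSpace F] [T2Space F] [MeasurableSpace F] [BorelSpace F]
  [NormedAddCommGroup E] [InnerProductSpace ℝ E] [MeasurableSpace E] [BorelSpace E]
  [SecondCountableTopology E]

theorem isGreatest_integral_mul_inner_comp {γ : ℝ → F} {v : ℝ → E} {w : ℝ → ℝ} {a b : ℝ}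
    (hab : a ≤ b) (hγ : Continuous γ) (hinj : InjOn γ (Icc a b)) (hv : Measurable v)
    (hw : Measurable w) (hw0 : ∀ s, 0 ≤ w s)
    (hint : IntervalIntegrable (fun s => w s * ‖v s‖) volume a b) :
    IsGreatest {r : ℝ | ∃ g : F → E, Measurable g ∧ (∀ x, ‖g x‖ ≤ 1) ∧
        r = ∫ s in a..b, w s * ⟪g (γ s), v s⟫_ℝ}
      (∫ s in a..b, w s * ‖v s‖) := by
  obtain ⟨g, hg, hg1, hgv⟩ :=
    exists_measurable_unit_field_along measurableSet_Icc hγ.continuousOn hinj hv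
  refine ⟨⟨g, hg, hg1, intervalIntegral.integral_congr fun s hs => ?_⟩, ?_⟩
  · rw [uIcc_of_le hab] at hs
    simp only [hgv s hs]
  · rintro r ⟨h, hh, hh1, rfl⟩
    have hbound : ∀ s, |w s * ⟪h (γ s), v s⟫_ℝ| ≤ w s * ‖v s‖ := fun s => by
      rw [abs_mul, abs_of_nonneg (hw0 s)]
      exact mul_le_mul_of_nonneg_left (abs_real_inner_le_norm_of_norm_le_one (hh1 _)) (hw0 s)
    have hint' : IntervalIntegrable (fun s => w s * ⟪h (γ s), v s⟫_ℝ) volume a b :=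
      hint.mono_fun' (hw.mul ((hh.comp hγ.measurable).inner hv)).aestronglyMeasurable
        (ae_of_all _ hbound)
    exact intervalIntegral.integral_mono_on hab hint' hint fun s _ =>
      (le_abs_self _).trans (hbound s)

lemma toReal_map_withDensity_ofReal_apply {α β : Type*} [MeasurableSpace α] [MeasurableSpace β]
    {μ : Measure α} {γ : α → β} {f : α → ℝ} (hγ : Measurable γ) (hf : 0 ≤ f)
    (hfm : AEStronglyMeasurable f μ) {A : Set β} (hA : MeasurableSet A) :
    ((μ.withDensity fun s => ENNReal.ofReal (f s)).map γ A).toReal = ∫ s in γ ⁻¹' A, f s ∂μ := by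
  rw [Measure.map_apply hγ hA, withDensity_apply _ (hA.preimage hγ),
    integral_eq_lintegral_of_nonneg_ae (ae_of_all _ hf) hfm.restrict]

lemma intervalIntegral_indicator_comp_mul {β : Type*} [MeasurableSpace β] {γ : ℝ → β}
    (hγ : Measurable γ) {A : Set β} (hA : MeasurableSet A) (f : ℝ → ℝ) {a b : ℝ} (hab : a ≤ b) :
    ∫ s in a..b, A.indicator (fun _ => (1 : ℝ)) (γ s) * f s
      = ∫ s in γ ⁻¹' A, f s ∂(volume.restrict (Icc a b)) := by
  rw [intervalIntegral.integral_of_le hab, ← integral_Icc_eq_integral_Ioc,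
    ← integral_indicator (hA.preimage hγ)]
  congr 1 with s
  by_cases hs : γ s ∈ A <;> simp [hs]

/-- For a simple (injective) Lipschitz curve `γ : [0,1] → ℝ^k`, the total
variation of the vector measure `T^γ` (expressed by duality) attains the length:
`|T^γ|(ℝ^k) = L_γ`, and on each Borel set `A` the total variation measure
`|T^γ|` coincides with the pushforward `γ_#(‖γ'(s)‖ ds)`. -/
theorem curve_tv_eq_length_and_pushforward {k : ℕ}
    {γ : ℝ → EuclideanSpace ℝ (Fin k)} {K : NNReal}
    (hγ : LipschitzWith K γ) (hsimple : InjOn γ (Icc 0 1)) :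
    IsLUB {r : ℝ | ∃ g : EuclideanSpace ℝ (Fin k) → EuclideanSpace ℝ (Fin k),
        Measurable g ∧ (∀ x, ‖g x‖ ≤ 1) ∧
        r = ∫ s in (0:ℝ)..1, (inner ℝ (g (γ s)) (deriv γ s) : ℝ)}
      (∫ s in (0:ℝ)..1, ‖deriv γ s‖) ∧
    ∀ A : Set (EuclideanSpace ℝ (Fin k)), MeasurableSet A →
      sSup {r : ℝ | ∃ g : EuclideanSpace ℝ (Fin k) → EuclideanSpace ℝ (Fin k),
          Measurable g ∧ (∀ x, ‖g x‖ ≤ 1) ∧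
          r = ∫ s in (0:ℝ)..1,
            A.indicator (fun _ => (1:ℝ)) (γ s) * (inner ℝ (g (γ s)) (deriv γ s) : ℝ)}
        = ((Measure.map γ
            ((volume.restrict (Icc (0:ℝ) 1)).withDensity
              (fun s => ENNReal.ofReal ‖deriv γ s‖))) A).toReal := by
  have hγm : Measurable γ := hγ.continuous.measurable
  have hγ' : Measurable (deriv γ) := measurable_deriv γ
  have hspeed : IntervalIntegrable (fun s => ‖deriv γ s‖) volume 0 1 :=
    intervalIntegrable_const.mono_fun' hγ'.norm.aestronglyMeasurable
      (ae_of_all _ fun s => by simpa using norm_deriv_le_of_lipschitz hγ (x₀ := s))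
  have hweighted : ∀ w : ℝ → ℝ, Measurable w → (∀ s, w s ∈ Icc 0 1) →
      IsGreatest {r : ℝ | ∃ g : EuclideanSpace ℝ (Fin k) → EuclideanSpace ℝ (Fin k),
          Measurable g ∧ (∀ x, ‖g x‖ ≤ 1) ∧ r = ∫ s in (0:ℝ)..1, w s * ⟪g (γ s), deriv γ s⟫_ℝ}
        (∫ s in (0:ℝ)..1, w s * ‖deriv γ s‖) := fun w hw hw01 =>
    isGreatest_integral_mul_inner_comp zero_le_one hγ.continuous hsimple hγ' hw
      (fun s => (hw01 s).1) <| hspeed.mono_fun' (hw.mul hγ'.norm).aestronglyMeasurable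
        (ae_of_all _ fun s => by
          simp only [norm_mul, norm_norm, Real.norm_of_nonneg (hw01 s).1]
          exact mul_le_of_le_one_left (norm_nonneg _) (hw01 s).2)
  refine ⟨by simpa using (hweighted (fun _ => 1) measurable_const fun _ => by simp).isLUB,
    fun A hA => ?_⟩
  have hind : Measurable fun s => A.indicator (fun _ => (1 : ℝ)) (γ s) :=
    (measurable_const.indicator hA).comp hγm
  refine ((hweighted _ hind fun s => ?_).csSup_eq).trans ?_
  · by_cases hs : γ s ∈ A <;> simp [hs]
  rw [toReal_map_withDensity_ofReal_apply hγm (fun _ => norm_nonneg _)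
    hγ'.norm.aestronglyMeasurable hA,
    intervalIntegral_indicator_comp_mul hγm hA _ zero_le_one]
end

section
/- Suppose V : (0,T) × ℝ^d → ℝ^d satisfies the Osgood condition |⟨V(t,x)−V(t,y), x−y⟩| ≤ C(t)‖x−y‖ρ(‖x−y‖) for all x,y and t. Then its Filippov regularization 𝕍 inherits the same bound: for every v ∈ 𝕍(t,x) and w ∈ 𝕍(t,y), |⟨v−w, x−y⟩| ≤ C(t)‖x−y‖ρ(‖x−y‖). -/
open MeasureTheory Set

/-- The Filippov regularization of a vector field. -/
def filippovReg {n : ℕ} (V : ℝ → EuclideanSpace ℝ (Fin n) → EuclideanSpace ℝ (Fin n))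
    (t : ℝ) (x : EuclideanSpace ℝ (Fin n)) : Set (EuclideanSpace ℝ (Fin n)) :=
  ⋂ r ∈ Ioi (0:ℝ), closure (convexHull ℝ (V t '' Metric.ball x r))

/-!
Fix `ε > 0`. By the Osgood bound at nearby points `x', y'`, continuity of `s ↦ C s ρ(s)` and
boundedness of `V`, for small `r` every difference `V(x') - V(y')` with `x' ∈ B(x, r)`,
`y' ∈ B(y, r)` satisfies `|⟨V(x') - V(y'), x - y⟩| ≤ C ‖x - y‖ ρ(‖x - y‖) + ε`. Such a two-sided
bound on a continuous linear functional cuts out a closed convex set, and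
`cl conv S - cl conv T ⊆ cl conv (S - T)`, so the bound passes to `𝕍(t,x) - 𝕍(t,y)`.
-/

open Filter Topology Metric
open scoped RealInnerProductSpace Pointwise

theorem sub_mem_closure_convexHull_sub {E : Type*} [AddCommGroup E] [Module ℝ E]
    [TopologicalSpace E] [IsTopologicalAddGroup E] {s t : Set E} {v w : E}
    (hv : v ∈ closure (convexHull ℝ s)) (hw : w ∈ closure (convexHull ℝ t)) :
    v - w ∈ closure (convexHull ℝ (s - t)) :=
  map_mem_closure₂ continuous_sub hv hw fun _ ha _ hb ↦
    convexHull_sub (R := ℝ) s t ▸ sub_mem_sub ha hb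

theorem ContinuousLinearMap.abs_le_of_mem_closure_convexHull {E : Type*} [AddCommGroup E]
    [Module ℝ E] [TopologicalSpace E] (ℓ : E →L[ℝ] ℝ) {s : Set E} {b : ℝ}
    (h : ∀ u ∈ s, |ℓ u| ≤ b) {v : E} (hv : v ∈ closure (convexHull ℝ s)) : |ℓ v| ≤ b := by
  have hconvex : Convex ℝ (ℓ ⁻¹' Icc (-b) b) := (convex_Icc _ _).linear_preimage ℓ.toLinearMap
  have hsub : closure (convexHull ℝ s) ⊆ ℓ ⁻¹' Icc (-b) b :=
    closure_minimal (convexHull_min (fun u hu ↦ abs_le.mp (h u hu)) hconvex)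
      (isClosed_Icc.preimage ℓ.continuous)
  exact abs_le.mpr (hsub hv)

section InnerProductSpace

variable {E : Type*} [NormedAddCommGroup E] [InnerProductSpace ℝ E]

theorem abs_inner_sub_le_of_mem_closure_convexHull {s t : Set E} {z : E} {b : ℝ}
    (h : ∀ a ∈ s, ∀ a' ∈ t, |⟪a - a', z⟫| ≤ b) {v w : E}
    (hv : v ∈ closure (convexHull ℝ s)) (hw : w ∈ closure (convexHull ℝ t)) :
    |⟪v - w, z⟫| ≤ b := by
  have hle := (innerSL ℝ z).abs_le_of_mem_closure_convexHull (s := s - t) (b := b) ?_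
    (sub_mem_closure_convexHull_sub hv hw)
  · rwa [innerSL_apply_apply, real_inner_comm] at hle
  · rintro _ ⟨a, ha, a', ha', rfl⟩
    rw [innerSL_apply_apply, real_inner_comm]
    exact h a ha a' ha'

theorem abs_inner_le_abs_inner_add_mul_norm_sub {a u u' : E} {K : ℝ} (ha : ‖a‖ ≤ K) :
    |⟪a, u⟫| ≤ |⟪a, u'⟫| + K * ‖u - u'‖ :=
  calc |⟪a, u⟫| = |⟪a, u'⟫ + ⟪a, u - u'⟫| := by rw [← inner_add_right, add_sub_cancel]
    _ ≤ |⟪a, u'⟫| + ‖a‖ * ‖u - u'‖ := by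
      grw [abs_add_le, abs_real_inner_le_norm a (u - u')]
    _ ≤ |⟪a, u'⟫| + K * ‖u - u'‖ := by gcongr

theorem exists_pos_forall_ball_abs_inner_sub_le {F : E → E} {g : ℝ → ℝ} {M : ℝ}
    (hF : ∀ z, ‖F z‖ ≤ M) (hg : ContinuousOn g (Ico 0 1))
    (hO : ∀ x y, ‖x - y‖ < 1 → |⟪F x - F y, x - y⟫| ≤ g ‖x - y‖)
    {x y : E} (hxy : ‖x - y‖ < 1) {ε : ℝ} (hε : 0 < ε) :
    ∃ r > 0, ∀ x' ∈ ball x r, ∀ y' ∈ ball y r,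
      |⟪F x' - F y', x - y⟫| ≤ g ‖x - y‖ + ε := by
  have hdist : Continuous fun p : E × E ↦ ‖p.1 - p.2‖ := by fun_prop
  have hdist_tendsto := hdist.tendsto (x, y)
  have hnear_lt_one : ∀ᶠ p : E × E in 𝓝 (x, y), ‖p.1 - p.2‖ < 1 :=
    hdist_tendsto.eventually (gt_mem_nhds hxy)
  have hg_near : ∀ᶠ p : E × E in 𝓝 (x, y), g ‖p.1 - p.2‖ < g ‖x - y‖ + ε / 2 := by
    have htendsto : Tendsto (fun p : E × E ↦ ‖p.1 - p.2‖) (𝓝 (x, y)) (𝓝[Ico 0 1] ‖x - y‖) :=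
      tendsto_nhdsWithin_iff.mpr
        ⟨hdist_tendsto, hnear_lt_one.mono fun p hp ↦ ⟨norm_nonneg _, hp⟩⟩
    exact ((hg _ ⟨norm_nonneg _, hxy⟩).tendsto.comp htendsto).eventually
      (gt_mem_nhds (by linarith))
  have herr_near : ∀ᶠ p : E × E in 𝓝 (x, y), 2 * M * ‖(x - y) - (p.1 - p.2)‖ < ε / 2 := by
    have hcont : Continuous fun p : E × E ↦ 2 * M * ‖(x - y) - (p.1 - p.2)‖ := by fun_prop
    exact (hcont.tendsto (x, y)).eventually (gt_mem_nhds (by simpa using half_pos hε))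
  obtain ⟨r, hr, hball⟩ :=
    eventually_nhds_iff_ball.mp (hnear_lt_one.and (hg_near.and herr_near))
  refine ⟨r, hr, fun x' hx' y' hy' ↦ ?_⟩
  obtain ⟨hlt, hg', herr⟩ := hball (x', y') (ball_prod_same x y r ▸ mk_mem_prod hx' hy')
  have hFdiff : ‖F x' - F y'‖ ≤ 2 * M := (norm_sub_le _ _).trans (by linarith [hF x', hF y'])
  calc |⟪F x' - F y', x - y⟫|
      ≤ |⟪F x' - F y', x' - y'⟫| + 2 * M * ‖(x - y) - (x' - y')‖ :=
        abs_inner_le_abs_inner_add_mul_norm_sub hFdiff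
    _ ≤ g ‖x' - y'‖ + 2 * M * ‖(x - y) - (x' - y')‖ := by gcongr; exact hO x' y' hlt
    _ ≤ g ‖x - y‖ + ε := by linarith

end InnerProductSpace

theorem filippovReg_osgood_general {n : ℕ}
    {V : ℝ → EuclideanSpace ℝ (Fin n) → EuclideanSpace ℝ (Fin n)}
    {ρ C : ℝ → ℝ} {t : ℝ}
    (hρc : ContinuousOn ρ (Ico 0 1))
    (hbound : ∃ M : ℝ, ∀ z, ‖V t z‖ ≤ M)
    (hO : ∀ x y, ‖x - y‖ < 1 →
      |(inner ℝ (V t x - V t y) (x - y) : ℝ)| ≤ C t * ‖x - y‖ * ρ ‖x - y‖) :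
    ∀ x y, ‖x - y‖ < 1 →
      ∀ v ∈ filippovReg V t x, ∀ w ∈ filippovReg V t y,
        |(inner ℝ (v - w) (x - y) : ℝ)| ≤ C t * ‖x - y‖ * ρ ‖x - y‖ := by
  obtain ⟨M, hM⟩ := hbound
  have hg : ContinuousOn (fun s ↦ C t * s * ρ s) (Ico 0 1) :=
    (continuousOn_const.mul continuousOn_id).mul hρc
  intro x y hxy v hv w hw
  refine le_of_forall_pos_le_add fun ε hε ↦ ?_
  obtain ⟨r, hr, hpair⟩ := exists_pos_forall_ball_abs_inner_sub_le hM hg hO hxy hε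
  refine abs_inner_sub_le_of_mem_closure_convexHull ?_ (mem_iInter₂.mp hv r hr)
    (mem_iInter₂.mp hw r hr)
  rintro _ ⟨x', hx', rfl⟩ _ ⟨y', hy', rfl⟩
  exact hpair x' hx' y' hy'

/-- The Filippov regularization inherits the two-sided Osgood bound (O): for all
`v ∈ 𝕍(t,x)` and `w ∈ 𝕍(t,y)`, `|⟨v - w, x - y⟩| ≤ C(t) ‖x-y‖ ρ(‖x-y‖)`
(with the modulus `ρ` extended by `∞` on `[1,∞)`, i.e. for `‖x-y‖ < 1`). -/
theorem filippovReg_osgood {n : ℕ}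
    {V : ℝ → EuclideanSpace ℝ (Fin n) → EuclideanSpace ℝ (Fin n)}
    {ρ C : ℝ → ℝ} {t : ℝ}
    (hρc : ContinuousOn ρ (Ico 0 1)) (hρm : MonotoneOn ρ (Ico 0 1))
    (hρ0 : ρ 0 = 0) (hρnn : ∀ s, 0 ≤ ρ s) (hCnn : 0 ≤ C t)
    (hbound : ∃ M : ℝ, ∀ z, ‖V t z‖ ≤ M)
    (hO : ∀ x y, ‖x - y‖ < 1 →
      |(inner ℝ (V t x - V t y) (x - y) : ℝ)| ≤ C t * ‖x - y‖ * ρ ‖x - y‖) :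
    ∀ x y, ‖x - y‖ < 1 →
      ∀ v ∈ filippovReg V t x, ∀ w ∈ filippovReg V t y,
        |(inner ℝ (v - w) (x - y) : ℝ)| ≤ C t * ‖x - y‖ * ρ ‖x - y‖ :=
  filippovReg_osgood_general hρc hbound hO
end

section
/- Let V satisfy (O) and (B), with flow X. Then for each s, t ∈ [0,T], the map x ↦ X(s,t,x) is a homeomorphism of ℝ^d, with inverse x ↦ X(t,s,x). -/
open MeasureTheory Set

/-- An Osgood modulus of continuity. -/
def OsgoodModulus (ρ : ℝ → ℝ) : Prop :=
  ContinuousOn ρ (Ico 0 1) ∧ MonotoneOn ρ (Ico 0 1) ∧ ρ 0 = 0 ∧ (∀ s, 0 ≤ ρ s) ∧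
    ∫⁻ s in Ioo (0:ℝ) 1, ENNReal.ofReal (1 / ρ s) = ⊤

/-- The two-sided Osgood condition (O) on the velocity field
(required when `‖x - y‖ < 1`, since `ρ = ∞` on `[1,∞)`). -/
def OsgoodCond {n : ℕ} (V : ℝ → EuclideanSpace ℝ (Fin n) → EuclideanSpace ℝ (Fin n))
    (C ρ : ℝ → ℝ) (T : ℝ) : Prop :=
  ∀ t ∈ Ioo (0:ℝ) T, ∀ x y, ‖x - y‖ < 1 →
    |(inner ℝ (V t x - V t y) (x - y) : ℝ)| ≤ C t * ‖x - y‖ * ρ ‖x - y‖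

/-- The uniform bound (B): `‖V(t,x)‖ ≤ D(t)` with `D ∈ L¹(0,T)`. -/
def BoundCond {n : ℕ} (V : ℝ → EuclideanSpace ℝ (Fin n) → EuclideanSpace ℝ (Fin n))
    (D : ℝ → ℝ) (T : ℝ) : Prop :=
  IntegrableOn D (Ioo 0 T) ∧ ∀ t ∈ Ioo (0:ℝ) T, ∀ x, ‖V t x‖ ≤ D t

/-- `Y` is a generalized (Filippov) solution of the ODE on `[0,T]`. -/
def FilippovSol {n : ℕ} (V : ℝ → EuclideanSpace ℝ (Fin n) → EuclideanSpace ℝ (Fin n))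
    (T : ℝ) (Y : ℝ → EuclideanSpace ℝ (Fin n)) : Prop :=
  ∃ g : ℝ → EuclideanSpace ℝ (Fin n), IntegrableOn g (Icc 0 T) ∧
    (∀ t ∈ Icc 0 T, Y t = Y 0 + ∫ u in (0:ℝ)..t, g u) ∧
    ∀ᵐ t ∂(volume.restrict (Ioo 0 T)), g t ∈ filippovReg V t (Y t)

/-- `X` is the (unique) Filippov flow of `V` on `[0,T]`: for each initial time
`s` and point `x`, `t ↦ X s t x` is the unique Filippov solution with value `x`
at time `s`. -/
def IsFilippovFlow {n : ℕ} (V : ℝ → EuclideanSpace ℝ (Fin n) → EuclideanSpace ℝ (Fin n))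
    (T : ℝ) (X : ℝ → ℝ → EuclideanSpace ℝ (Fin n) → EuclideanSpace ℝ (Fin n)) : Prop :=
  ∀ s ∈ Icc (0:ℝ) T, ∀ x, X s s x = x ∧ FilippovSol V T (fun t => X s t x) ∧
    ∀ Y, FilippovSol V T Y → Y s = x → ∀ t ∈ Icc (0:ℝ) T, Y t = X s t x

/-!
The inverse is forced by uniqueness: `t ↦ X s t x` is the Filippov solution taking the value
`X s t x` at time `t`, so `X t s (X s t x) = x`. Continuity comes from a quantitative Osgood
lemma. Condition (O) survives Filippov regularization, so the distance `φ = ‖Y - Z‖` of two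
solutions satisfies `|d(φ²)/dt| ≤ 2 C φ ρ(φ)`. While `φ` climbs from `r / 2` to `r` it therefore
uses up at least `3 r / (8 ρ r)` of `∫ C`, and the divergence of `∫ 1 / ρ` makes the total over
the dyadic levels `ε / 2 ^ j` unbounded: solutions starting `ε / 2 ^ N` apart cannot separate
to distance `ε` within the budget `∫₀ᵀ C`.
-/

open Filter Topology

namespace OsgoodModulus

variable {ρ : ℝ → ℝ} {ε : ℝ}

lemma setLIntegral_one_div_le (hρ : OsgoodModulus ρ) {x : ℝ} (hx : 0 ≤ x) (hρx : 0 < ρ x)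
    {S : Set ℝ} (hS : S ⊆ Ico x 1) :
    ∫⁻ s in S, ENNReal.ofReal (1 / ρ s) ≤ ENNReal.ofReal (1 / ρ x) * volume S :=
  (setLIntegral_mono measurable_const fun _ hs => ENNReal.ofReal_le_ofReal <|
    one_div_le_one_div_of_le hρx <| hρ.2.1 ⟨hx, (hS hs).1.trans_lt (hS hs).2⟩
      ⟨hx.trans (hS hs).1, (hS hs).2⟩ (hS hs).1).trans_eq (setLIntegral_const _ _)

lemma not_summable_dyadic (hρ : OsgoodModulus ρ) (hε0 : 0 < ε) (hε1 : ε < 1)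
    (hpos : ∀ j : ℕ, 0 < ρ (ε / 2 ^ j)) :
    ¬ Summable fun j : ℕ => ε / 2 ^ j / ρ (ε / 2 ^ j) := by
  set r : ℕ → ℝ := fun j => ε / 2 ^ j with hr
  have hr_pos (j : ℕ) : 0 < r j := by positivity
  have hr_lt (j : ℕ) : r j < 1 := (div_le_self hε0.le (one_le_pow₀ one_le_two)).trans_lt hε1
  have hr_succ (j : ℕ) : r j - r (j + 1) = r (j + 1) := by simp only [hr, pow_succ]; ring
  intro hsum
  have hcover : Ioo (0 : ℝ) 1 ⊆ (⋃ j, Ioc (r (j + 1)) (r j)) ∪ Ico ε 1 := by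
    rintro x ⟨hx0, hx1⟩
    rcases lt_or_ge x ε with hxε | hxε
    · obtain ⟨j, hj, hj'⟩ := exists_nat_pow_near (one_le_div hx0 |>.2 hxε.le) one_lt_two
      refine Or.inl (mem_iUnion.2 ⟨j, ?_, ?_⟩)
      · simpa [hr, div_lt_iff₀, hx0, mul_comm] using hj'
      · simpa [hr, le_div_iff₀, hx0, mul_comm] using hj
    · exact Or.inr ⟨hxε, hx1⟩
  have hpiece (j : ℕ) : ∫⁻ x in Ioc (r (j + 1)) (r j), ENNReal.ofReal (1 / ρ x)
      ≤ ENNReal.ofReal (r (j + 1) / ρ (r (j + 1))) := by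
    refine (hρ.setLIntegral_one_div_le (hr_pos _).le (hpos _)
      fun x hx => ⟨hx.1.le, hx.2.trans_lt (hr_lt j)⟩).trans_eq ?_
    rw [Real.volume_Ioc, hr_succ, ← ENNReal.ofReal_mul (one_div_pos.2 (hpos _)).le,
      one_div_mul_eq_div]
  have htail := hρ.setLIntegral_one_div_le hε0.le (by simpa using hpos 0) (subset_refl (Ico ε 1))
  have hsum' : Summable fun j => r (j + 1) / ρ (r (j + 1)) := (summable_nat_add_iff 1).2 hsum
  have hfin : ∫⁻ x in Ioo (0 : ℝ) 1, ENNReal.ofReal (1 / ρ x) < ⊤ :=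
    calc ∫⁻ x in Ioo (0 : ℝ) 1, ENNReal.ofReal (1 / ρ x)
        ≤ ∫⁻ x in (⋃ j, Ioc (r (j + 1)) (r j)) ∪ Ico ε 1, ENNReal.ofReal (1 / ρ x) :=
          lintegral_mono_set hcover
      _ ≤ (∑' j, ∫⁻ x in Ioc (r (j + 1)) (r j), ENNReal.ofReal (1 / ρ x))
            + ∫⁻ x in Ico ε 1, ENNReal.ofReal (1 / ρ x) :=
          (lintegral_union_le _ _ _).trans (add_le_add (lintegral_iUnion_le _ _) le_rfl)
      _ ≤ ENNReal.ofReal (∑' j, r (j + 1) / ρ (r (j + 1)))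
            + ENNReal.ofReal (1 / ρ ε) * volume (Ico ε 1) := by
          rw [ENNReal.ofReal_tsum_of_nonneg (fun j => (div_pos (hr_pos _) (hpos _)).le) hsum']
          exact add_le_add (ENNReal.tsum_le_tsum hpiece) htail
      _ < ⊤ := by simp [Real.volume_Ico, ENNReal.mul_lt_top]
  exact hfin.ne hρ.2.2.2.2

lemma mul_apply_le_mul_apply (hρ : OsgoodModulus ρ) {x y : ℝ} (hx : 0 ≤ x) (hxy : x ≤ y)
    (hy : y < 1) : x * ρ x ≤ y * ρ y :=
  mul_le_mul hxy (hρ.2.1 ⟨hx, hxy.trans_lt hy⟩ ⟨hx.trans hxy, hy⟩ hxy) (hρ.2.2.2.1 _) (hx.trans hxy)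

lemma exists_sum_gt (hρ : OsgoodModulus ρ) (hε0 : 0 < ε) (hε1 : ε < 1) (M : ℝ) :
    ∃ N : ℕ, ∀ κ : ℕ → ℝ, (∀ j < N, ε / 2 ^ j ≤ ρ (ε / 2 ^ j) * κ j) →
      M < ∑ j ∈ Finset.range N, κ j := by
  by_cases hpos : ∀ j : ℕ, 0 < ρ (ε / 2 ^ j)
  · have htends := (not_summable_iff_tendsto_nat_atTop_of_nonneg
      fun j => (div_pos (by positivity) (hpos j)).le).1 (hρ.not_summable_dyadic hε0 hε1 hpos)
    obtain ⟨N, hN⟩ := (htends.eventually_gt_atTop M).exists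
    refine ⟨N, fun κ hκ => hN.trans_le (Finset.sum_le_sum fun j hj => ?_)⟩
    exact (div_le_iff₀' (hpos j)).2 (hκ j (Finset.mem_range.1 hj))
  · simp only [not_forall, not_lt] at hpos
    obtain ⟨j, hj⟩ := hpos
    refine ⟨j + 1, fun κ hκ => absurd (hκ j j.lt_succ_self) ?_⟩
    rw [le_antisymm hj (hρ.2.2.2.1 _), zero_mul, not_le]
    positivity

end OsgoodModulus

lemma ContinuousOn.exists_first_hit {φ : ℝ → ℝ} {a u y : ℝ} (hau : a ≤ u)
    (hφ : ContinuousOn φ (Icc a u)) (ha : φ a ≤ y) (hu : y ≤ φ u) :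
    ∃ σ ∈ Icc a u, φ σ = y ∧ ∀ v ∈ Ico a σ, φ v < y := by
  set S := Icc a u ∩ φ ⁻¹' Ici y
  have hbdd : BddBelow S := ⟨a, fun v hv => hv.1.1⟩
  have hσ : sInf S ∈ S :=
    (hφ.preimage_isClosed_of_isClosed isClosed_Icc isClosed_Ici).csInf_mem
      ⟨u, ⟨hau, le_rfl⟩, hu⟩ hbdd
  refine ⟨sInf S, hσ.1, ?_, fun v hv => ?_⟩
  · obtain ⟨v, hv, hφv⟩ :=
      intermediate_value_Icc hσ.1.1 (hφ.mono (Icc_subset_Icc_right hσ.1.2)) ⟨ha, hσ.2⟩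
    have hvS : v ∈ S := ⟨⟨hv.1, hv.2.trans hσ.1.2⟩, hφv.ge⟩
    rwa [le_antisymm hv.2 (csInf_le hbdd hvS)] at hφv
  · by_contra! h
    exact (csInf_le hbdd ⟨⟨hv.1, hv.2.le.trans hσ.1.2⟩, h⟩).not_gt hv.2

lemma sum_integral_le_integral_of_mem_Icc {c : ℝ → ℝ} {a b : ℝ} (hc0 : ∀ v ∈ Icc a b, 0 ≤ c v)
    (hc : IntervalIntegrable c volume a b) {σ : ℕ → ℝ} {N : ℕ} (hσ : ∀ j ≤ N, σ j ∈ Icc a b)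
    (hσN : σ N ≤ σ 0) :
    ∑ j ∈ Finset.range N, ∫ v in σ (j + 1)..σ j, c v ≤ ∫ v in a..b, c v := by
  have hint (j : ℕ) (hj : j < N) : IntervalIntegrable c volume (σ j) (σ (j + 1)) :=
    hc.mono_set (uIcc_subset_uIcc (Icc_subset_uIcc (hσ j hj.le)) (Icc_subset_uIcc (hσ _ hj)))
  calc ∑ j ∈ Finset.range N, ∫ v in σ (j + 1)..σ j, c v = ∫ v in σ N..σ 0, c v := by
        rw [intervalIntegral.integral_symm, ← intervalIntegral.sum_integral_adjacent_intervals hint,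
          ← Finset.sum_neg_distrib]
        exact Finset.sum_congr rfl fun j _ => intervalIntegral.integral_symm _ _
    _ ≤ ∫ v in a..b, c v :=
        intervalIntegral.integral_mono_interval (hσ N le_rfl).1 hσN (hσ 0 N.zero_le).2
          ((ae_restrict_iff' measurableSet_Ioc).2 <|
            Eventually.of_forall fun v hv => hc0 v (Ioc_subset_Icc_self hv)) hc

/-- Integrated form of `|d(φ²)/dt| ≤ 2 c φ ρ(φ)` on `[a, b]`, stated level by level so that
no measurability of `ρ ∘ φ` is needed. -/
def OsgoodEnergyBound (ρ c φ : ℝ → ℝ) (a b : ℝ) : Prop :=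
  ∀ w ∈ Icc a b, ∀ u ∈ Icc w b, ∀ r < 1, (∀ v ∈ Icc w u, φ v ≤ r) →
    |φ u ^ 2 - φ w ^ 2| ≤ 2 * r * ρ r * ∫ v in w..u, c v

namespace OsgoodEnergyBound

variable {ρ c φ : ℝ → ℝ} {a b ε M : ℝ} {N : ℕ}

lemma mono {a' b' : ℝ} (hE : OsgoodEnergyBound ρ c φ a b) (ha : a ≤ a') (hb : b' ≤ b) :
    OsgoodEnergyBound ρ c φ a' b' := fun w hw u hu =>
  hE w ⟨ha.trans hw.1, hw.2.trans hb⟩ u ⟨hu.1, hu.2.trans hb⟩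

lemma comp_neg (hE : OsgoodEnergyBound ρ c φ a b) :
    OsgoodEnergyBound ρ (fun v => c (-v)) (fun v => φ (-v)) (-b) (-a) := by
  intro w hw u hu r hr hφr
  have h := hE (-u) ⟨by linarith [hu.2], by linarith [hu.1, hw.1]⟩ (-w)
    ⟨by linarith [hu.1], by linarith [hw.1]⟩ r hr
    fun v hv => by simpa using hφr (-v) ⟨by linarith [hv.2], by linarith [hv.1]⟩
  rwa [abs_sub_comm, ← intervalIntegral.integral_comp_neg] at h

lemma le_mul_integral_of_climb (hE : OsgoodEnergyBound ρ c φ a b) {w u r : ℝ}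
    (hw : w ∈ Icc a b) (hu : u ∈ Icc w b) (hr0 : 0 < r) (hr1 : r < 1) (hφw : φ w = r / 2)
    (hφu : φ u = r) (hφr : ∀ v ∈ Icc w u, φ v ≤ r) :
    r ≤ ρ r * (8 / 3 * ∫ v in w..u, c v) := by
  have h := hE w hw u hu r hr1 hφr
  rw [hφw, hφu, abs_of_nonneg (by nlinarith)] at h
  nlinarith

lemma forall_le_of_left_lt (hE : OsgoodEnergyBound ρ c φ a b) (hε0 : 0 < ε) (hε1 : ε < 1)
    (hN : ∀ κ : ℕ → ℝ, (∀ j < N, ε / 2 ^ j ≤ ρ (ε / 2 ^ j) * κ j) →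
      8 / 3 * M < ∑ j ∈ Finset.range N, κ j)
    (hφ : ContinuousOn φ (Icc a b)) (hc0 : ∀ v ∈ Icc a b, 0 ≤ c v)
    (hc : IntervalIntegrable c volume a b) (hcM : ∫ v in a..b, c v ≤ M)
    (ha : φ a < ε / 2 ^ N) : ∀ u ∈ Icc a b, φ u ≤ ε := by
  intro u hu
  by_contra! hεu
  set r : ℕ → ℝ := fun j => ε / 2 ^ j with hr
  have hr_pos (j : ℕ) : 0 < r j := by positivity
  have hr_anti {j k : ℕ} (hjk : j ≤ k) : r k ≤ r j :=
    div_le_div_of_nonneg_left hε0.le (by positivity) (pow_le_pow_right₀ one_le_two hjk)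
  have hr_succ (j : ℕ) : r (j + 1) = r j / 2 := by simp only [hr, pow_succ]; ring
  choose! σ hσ using fun j (hj : j ≤ N) =>
    hφ.mono (Icc_subset_Icc_right hu.2) |>.exists_first_hit hu.1
      (ha.le.trans (hr_anti hj)) ((hr_anti j.zero_le).trans_lt (by simpa [hr] using hεu)).le
  have hσ_mem {j : ℕ} (hj : j ≤ N) : σ j ∈ Icc a b := ⟨(hσ j hj).1.1, (hσ j hj).1.2.trans hu.2⟩
  have hσ_anti {j k : ℕ} (hjk : j ≤ k) (hk : k ≤ N) : σ k ≤ σ j := by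
    by_contra! h
    have := (hσ k hk).2.2 (σ j) ⟨(hσ j (hjk.trans hk)).1.1, h⟩
    rw [(hσ j (hjk.trans hk)).2.1] at this
    exact this.not_ge (hr_anti hjk)
  set I : ℕ → ℝ := fun j => ∫ v in σ (j + 1)..σ j, c v
  have hcross (j : ℕ) (hj : j < N) : r j ≤ ρ (r j) * (8 / 3 * I j) := by
    refine hE.le_mul_integral_of_climb (hσ_mem hj) ⟨hσ_anti j.le_succ hj, (hσ_mem hj.le).2⟩
      (hr_pos j) ((hr_anti j.zero_le).trans_lt (by simpa [hr] using hε1))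
      ((hσ (j + 1) hj).2.1.trans (hr_succ j)) (hσ j hj.le).2.1 fun v hv => ?_
    rcases hv.2.lt_or_eq with h | h
    · exact ((hσ j hj.le).2.2 v ⟨(hσ (j + 1) hj).1.1.trans hv.1, h⟩).le
    · rw [h, (hσ j hj.le).2.1]
  have hsum : ∑ j ∈ Finset.range N, I j ≤ M :=
    (sum_integral_le_integral_of_mem_Icc hc0 hc (fun j hj => hσ_mem hj)
      (hσ_anti N.zero_le le_rfl)).trans hcM
  have h := hN (fun j => 8 / 3 * I j) hcross
  rw [← Finset.mul_sum] at h
  linarith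

lemma forall_le_of_right_lt (hE : OsgoodEnergyBound ρ c φ a b) (hε0 : 0 < ε) (hε1 : ε < 1)
    (hN : ∀ κ : ℕ → ℝ, (∀ j < N, ε / 2 ^ j ≤ ρ (ε / 2 ^ j) * κ j) →
      8 / 3 * M < ∑ j ∈ Finset.range N, κ j)
    (hφ : ContinuousOn φ (Icc a b)) (hc0 : ∀ v ∈ Icc a b, 0 ≤ c v)
    (hc : IntervalIntegrable c volume a b) (hcM : ∫ v in a..b, c v ≤ M)
    (hb : φ b < ε / 2 ^ N) : ∀ u ∈ Icc a b, φ u ≤ ε := by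
  intro u hu
  have hmaps : MapsTo (fun v : ℝ => -v) (Icc (-b) (-a)) (Icc a b) := fun v hv =>
    ⟨by linarith [hv.2], by linarith [hv.1]⟩
  have h := hE.comp_neg.forall_le_of_left_lt hε0 hε1 hN (hφ.comp continuous_neg.continuousOn hmaps)
    (fun v hv => hc0 _ (hmaps hv)) ((IntervalIntegrable.iff_comp_neg (f := c)).1 hc).symm
    (by rwa [intervalIntegral.integral_comp_neg, neg_neg, neg_neg]) (by rwa [neg_neg])
    (-u) ⟨by linarith [hu.2], by linarith [hu.1]⟩
  simpa using h

end OsgoodEnergyBound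

theorem OsgoodModulus.exists_forall_le_of_osgoodEnergyBound {ρ : ℝ → ℝ} (hρ : OsgoodModulus ρ)
    {ε : ℝ} (hε0 : 0 < ε) (hε1 : ε < 1) (M : ℝ) :
    ∃ δ > 0, ∀ {c φ : ℝ → ℝ} {a b : ℝ}, OsgoodEnergyBound ρ c φ a b →
      ContinuousOn φ (Icc a b) → (∀ v ∈ Icc a b, 0 ≤ c v) →
      IntervalIntegrable c volume a b → ∫ v in a..b, c v ≤ M →
      φ a < δ ∨ φ b < δ → ∀ u ∈ Icc a b, φ u ≤ ε := by
  obtain ⟨N, hN⟩ := hρ.exists_sum_gt hε0 hε1 (8 / 3 * M)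
  refine ⟨ε / 2 ^ N, by positivity, fun hE hφ hc0 hc hcM hδ => ?_⟩
  rcases hδ with ha | hb
  · exact hE.forall_le_of_left_lt hε0 hε1 hN hφ hc0 hc hcM ha
  · exact hE.forall_le_of_right_lt hε0 hε1 hN hφ hc0 hc hcM hb

lemma abs_inner_sub_le_of_mem_closure_convexHull_s9 {E : Type*} [NormedAddCommGroup E]
    [InnerProductSpace ℝ E] {S S' : Set E} {a g h : E} {B : ℝ}
    (hB : ∀ x ∈ S, ∀ y ∈ S', |inner ℝ (x - y) a| ≤ B)
    (hg : g ∈ closure (convexHull ℝ S)) (hh : h ∈ closure (convexHull ℝ S')) :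
    |inner ℝ (g - h) a| ≤ B := by
  let L : E × E →L[ℝ] ℝ :=
    (innerSL ℝ a).comp (ContinuousLinearMap.fst ℝ E E - ContinuousLinearMap.snd ℝ E E)
  have hL (z : E × E) : L z = inner ℝ (z.1 - z.2) a := real_inner_comm _ _
  have hK : closure (convexHull ℝ (S ×ˢ S')) ⊆ L ⁻¹' Icc (-B) B :=
    closure_minimal (convexHull_min (fun z hz => by simpa [hL, abs_le] using hB _ hz.1 _ hz.2)
      ((convex_Icc _ _).linear_preimage L.toLinearMap)) (isClosed_Icc.preimage L.continuous)
  rw [convexHull_prod, closure_prod_eq] at hK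
  simpa [hL, abs_le] using hK (show (g, h) ∈ _ ×ˢ _ from ⟨hg, hh⟩)

section Filippov

variable {n : ℕ} {V : ℝ → EuclideanSpace ℝ (Fin n) → EuclideanSpace ℝ (Fin n)} {ρ C D : ℝ → ℝ}
  {T t : ℝ}

lemma abs_inner_apply_sub_apply_le_of_mem_ball (hρ : OsgoodModulus ρ) (hC0 : 0 ≤ C t)
    (hO : OsgoodCond V C ρ T) (hB : BoundCond V D T) (ht : t ∈ Ioo 0 T)
    {p q x y : EuclideanSpace ℝ (Fin n)} {r : ℝ} (hr : ‖p - q‖ + 2 * r < 1)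
    (hx : x ∈ Metric.ball p r) (hy : y ∈ Metric.ball q r) :
    |inner ℝ (V t x - V t y) (p - q)| ≤
      C t * (‖p - q‖ + 2 * r) * ρ (‖p - q‖ + 2 * r) + 4 * D t * r := by
  rw [Metric.mem_ball, dist_eq_norm] at hx hy
  have hcorr : ‖(p - q) - (x - y)‖ ≤ 2 * r := by
    calc ‖(p - q) - (x - y)‖ = ‖(y - q) - (x - p)‖ := by congr 1; abel
      _ ≤ ‖y - q‖ + ‖x - p‖ := norm_sub_le _ _
      _ ≤ 2 * r := by linarith
  have hxy : ‖x - y‖ ≤ ‖p - q‖ + 2 * r := by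
    calc ‖x - y‖ = ‖(p - q) - ((p - q) - (x - y))‖ := by rw [sub_sub_cancel]
      _ ≤ ‖p - q‖ + 2 * r := (norm_sub_le _ _).trans (by linarith)
  have hmain : |inner ℝ (V t x - V t y) (x - y)| ≤
      C t * (‖p - q‖ + 2 * r) * ρ (‖p - q‖ + 2 * r) :=
    (hO t ht x y (hxy.trans_lt hr)).trans <| by
      simp only [mul_assoc]
      exact mul_le_mul_of_nonneg_left (hρ.mul_apply_le_mul_apply (norm_nonneg _) hxy hr) hC0
  have herr : |inner ℝ (V t x - V t y) ((p - q) - (x - y))| ≤ 2 * D t * (2 * r) :=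
    (abs_real_inner_le_norm _ _).trans <| mul_le_mul
      ((norm_sub_le _ _).trans (by linarith [hB.2 t ht x, hB.2 t ht y])) hcorr
      (norm_nonneg _) (by linarith [(norm_nonneg _).trans (hB.2 t ht x)])
  calc |inner ℝ (V t x - V t y) (p - q)|
      = |inner ℝ (V t x - V t y) (x - y) + inner ℝ (V t x - V t y) ((p - q) - (x - y))| := by
        rw [← inner_add_right, add_sub_cancel]
    _ ≤ _ := (abs_add_le _ _).trans (add_le_add hmain herr)
    _ = _ := by ring

/-- The error `4 D r` coming from the balls of radius `r` vanishes as `r → 0` by continuity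
of `ρ`. -/
lemma abs_inner_sub_le_of_mem_filippovReg (hρ : OsgoodModulus ρ) (hC0 : 0 ≤ C t)
    (hO : OsgoodCond V C ρ T) (hB : BoundCond V D T) (ht : t ∈ Ioo 0 T)
    {p q g h : EuclideanSpace ℝ (Fin n)} (hpq : ‖p - q‖ < 1)
    (hg : g ∈ filippovReg V t p) (hh : h ∈ filippovReg V t q) :
    |inner ℝ (g - h) (p - q)| ≤ C t * ‖p - q‖ * ρ ‖p - q‖ := by
  set d := ‖p - q‖
  have hd0 : 0 ≤ d := norm_nonneg _
  have hscale : ∀ r ∈ Ioo 0 ((1 - d) / 2),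
      |inner ℝ (g - h) (p - q)| ≤ C t * (d + 2 * r) * ρ (d + 2 * r) + 4 * D t * r :=
    fun r hr => abs_inner_sub_le_of_mem_closure_convexHull_s9
      (by
        rintro _ ⟨x, hx, rfl⟩ _ ⟨y, hy, rfl⟩
        exact abs_inner_apply_sub_apply_le_of_mem_ball hρ hC0 hO hB ht (by linarith [hr.2]) hx hy)
      (mem_iInter₂.1 hg r hr.1) (mem_iInter₂.1 hh r hr.1)
  have hd : Tendsto (fun r : ℝ => d + 2 * r) (𝓝[>] 0) (𝓝[Ico 0 1] d) := by
    refine tendsto_nhdsWithin_iff.2 ⟨?_, ?_⟩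
    · exact ((continuous_const.add (continuous_const.mul continuous_id)).tendsto' 0 d
        (by simp [d])).mono_left nhdsWithin_le_nhds
    · filter_upwards [Ioo_mem_nhdsGT (show (0 : ℝ) < (1 - d) / 2 by linarith)] with r hr
      exact ⟨by linarith [hr.1], by linarith [hr.2]⟩
  have hlim : Tendsto (fun r => C t * (d + 2 * r) * ρ (d + 2 * r) + 4 * D t * r) (𝓝[>] 0)
      (𝓝 (C t * d * ρ d)) := by
    have herr : Tendsto (fun r : ℝ => 4 * D t * r) (𝓝[>] 0) (𝓝 (4 * D t * 0)) :=
      tendsto_const_nhds.mul (tendsto_id.mono_left nhdsWithin_le_nhds)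
    simpa using ((tendsto_const_nhds.mul (hd.mono_right nhdsWithin_le_nhds)).mul
      ((hρ.1 d ⟨hd0, hpq⟩).tendsto.comp hd)).add herr
  exact ge_of_tendsto hlim
    (eventually_of_mem (Ioo_mem_nhdsGT (show (0 : ℝ) < (1 - d) / 2 by linarith)) hscale)

end Filippov

lemma sq_eq_sq_add_integral_of_eq_add_integral {f k : ℝ → ℝ} {w u : ℝ}
    (hk : IntervalIntegrable k volume w u) (hf : ∀ v ∈ uIcc w u, f v = f w + ∫ z in w..v, k z) :
    f u ^ 2 = f w ^ 2 + ∫ v in w..u, 2 * (f v * k v) := by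
  set F : ℝ → ℝ := fun v => f w + ∫ z in w..v, k z
  have hFf (v : ℝ) (hv : v ∈ uIcc w u) : F v = f v := (hf v hv).symm
  have hF : AbsolutelyContinuousOnInterval F w u :=
    (LipschitzWith.const (f w)).lipschitzOnWith.absolutelyContinuousOnInterval.fun_add
      (hk.absolutelyContinuousOnInterval_intervalIntegral left_mem_uIcc)
  have hFk : ∀ᵐ v, v ∈ uIoc w u → deriv F v * F v + F v * deriv F v = 2 * (f v * k v) := by
    filter_upwards [hk.ae_hasDerivAt_integral] with v hv hvI
    rw [((hv (uIoc_subset_uIcc hvI) w left_mem_uIcc).const_add (f w)).deriv,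
      hFf v (uIoc_subset_uIcc hvI)]
    ring
  have h := hF.integral_deriv_mul_eq_sub hF
  rw [intervalIntegral.integral_congr_ae hFk, hFf u right_mem_uIcc, hFf w left_mem_uIcc] at h
  linarith

lemma EuclideanSpace.norm_sq_eq_add_integral_inner {ι : Type*} [Fintype ι]
    {Y k : ℝ → EuclideanSpace ℝ ι} {w u : ℝ} (hk : IntervalIntegrable k volume w u)
    (hY : ∀ v ∈ uIcc w u, Y v = Y w + ∫ z in w..v, k z) :
    ‖Y u‖ ^ 2 = ‖Y w‖ ^ 2 + ∫ v in w..u, 2 * inner ℝ (k v) (Y v) := by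
  have hki (i : ι) : IntervalIntegrable (fun v => k v i) volume w u :=
    ⟨(EuclideanSpace.proj (𝕜 := ℝ) i).integrable_comp hk.1,
      (EuclideanSpace.proj (𝕜 := ℝ) i).integrable_comp hk.2⟩
  have hYi (i : ι) (v : ℝ) (hv : v ∈ uIcc w u) : Y v i = Y w i + ∫ z in w..v, k z i := by
    have hkv : IntervalIntegrable k volume w v := hk.mono_set (uIcc_subset_uIcc_left hv)
    rw [hY v hv, PiLp.add_apply]
    congr 1
    exact ((EuclideanSpace.proj (𝕜 := ℝ) i).intervalIntegral_comp_comm hkv).symm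
  have hYc : ContinuousOn Y (uIcc w u) :=
    (continuousOn_const.add (intervalIntegral.continuousOn_primitive_interval' hk
      left_mem_uIcc)).congr hY
  have hint (i : ι) : IntervalIntegrable (fun v => 2 * (Y v i * k v i)) volume w u :=
    ((hki i).continuousOn_mul
      ((EuclideanSpace.proj (𝕜 := ℝ) i).continuous.comp_continuousOn hYc)).const_mul 2
  simp only [EuclideanSpace.real_norm_sq_eq, PiLp.inner_apply, RCLike.inner_apply, conj_trivial,
    Finset.mul_sum]
  rw [intervalIntegral.integral_finsetSum fun i _ => hint i, ← Finset.sum_add_distrib]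
  exact Finset.sum_congr rfl fun i _ =>
    sq_eq_sq_add_integral_of_eq_add_integral (hki i) (hYi i)

lemma eq_add_integral_of_forall_eq_add_integral {E : Type*} [NormedAddCommGroup E]
    [NormedSpace ℝ E] {Y g : ℝ → E} {T : ℝ} (hg : IntegrableOn g (Icc 0 T))
    (hY : ∀ t ∈ Icc 0 T, Y t = Y 0 + ∫ u in (0 : ℝ)..t, g u) {w v : ℝ} (hw : w ∈ Icc 0 T)
    (hv : v ∈ Icc 0 T) : Y v = Y w + ∫ u in w..v, g u := by
  have hint {p q : ℝ} (hp : p ∈ Icc 0 T) (hq : q ∈ Icc 0 T) : IntervalIntegrable g volume p q :=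
    (hg.mono_set (uIcc_subset_Icc hp hq)).intervalIntegrable
  have h0 : (0 : ℝ) ∈ Icc 0 T := ⟨le_rfl, hw.1.trans hw.2⟩
  rw [hY v hv, hY w hw, add_assoc,
    intervalIntegral.integral_add_adjacent_intervals (hint h0 hw) (hint hw hv)]

namespace FilippovSol

variable {n : ℕ} {V : ℝ → EuclideanSpace ℝ (Fin n) → EuclideanSpace ℝ (Fin n)} {T : ℝ}
  {Y Z : ℝ → EuclideanSpace ℝ (Fin n)}

lemma continuousOn (hY : FilippovSol V T Y) (hT : 0 ≤ T) : ContinuousOn Y (Icc 0 T) := by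
  obtain ⟨g, hg, hYg, -⟩ := hY
  rw [← uIcc_of_le hT] at hg ⊢
  exact (continuousOn_const.add (intervalIntegral.continuousOn_primitive_interval hg)).congr
    (uIcc_of_le hT ▸ hYg)

lemma osgoodEnergyBound_norm_sub {ρ C D : ℝ → ℝ} (hρ : OsgoodModulus ρ)
    (hC : IntegrableOn C (Ioo 0 T)) (hC0 : ∀ t, 0 ≤ C t) (hO : OsgoodCond V C ρ T)
    (hB : BoundCond V D T) (hY : FilippovSol V T Y) (hZ : FilippovSol V T Z) :
    OsgoodEnergyBound ρ C (fun v => ‖Y v - Z v‖) 0 T := by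
  obtain ⟨g, hg, hYg, hgF⟩ := hY
  obtain ⟨h, hh, hZh, hhF⟩ := hZ
  intro w hw u hu r hr hφr
  have hu' : u ∈ Icc 0 T := ⟨hw.1.trans hu.1, hu.2⟩
  have hsub : uIcc w u ⊆ Icc 0 T := uIcc_subset_Icc hw hu'
  have hk : IntervalIntegrable (fun v => g v - h v) volume w u :=
    ((hg.sub hh).mono_set hsub).intervalIntegrable
  have hΔ (v : ℝ) (hv : v ∈ uIcc w u) :
      Y v - Z v = (Y w - Z w) + ∫ z in w..v, (g z - h z) := by
    have hwv : uIcc w v ⊆ Icc 0 T := uIcc_subset_Icc hw (hsub hv)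
    rw [intervalIntegral.integral_sub (hg.mono_set hwv).intervalIntegrable
        (hh.mono_set hwv).intervalIntegrable,
      eq_add_integral_of_forall_eq_add_integral hg hYg hw (hsub hv),
      eq_add_integral_of_forall_eq_add_integral hh hZh hw (hsub hv)]
    abel
  have hC' : IntervalIntegrable C volume w u :=
    (((integrableOn_Icc_iff_integrableOn_Ioo (f := C)).2 hC).mono_set hsub).intervalIntegrable
  have hae : ∀ᵐ v ∂(volume.restrict (Ioo w u)),
      v ∈ Ioo 0 T ∧ g v ∈ filippovReg V v (Y v) ∧ h v ∈ filippovReg V v (Z v) := by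
    have hs : Ioo w u ⊆ Ioo 0 T := Ioo_subset_Ioo hw.1 hu.2
    filter_upwards [ae_restrict_mem measurableSet_Ioo, ae_restrict_of_ae_restrict_of_subset hs hgF,
      ae_restrict_of_ae_restrict_of_subset hs hhF] with v hv hgv hhv using ⟨hs hv, hgv, hhv⟩
  rw [Measure.restrict_congr_set Ioo_ae_eq_Ioc, ae_restrict_iff' measurableSet_Ioc] at hae
  show |‖Y u - Z u‖ ^ 2 - ‖Y w - Z w‖ ^ 2| ≤ _
  rw [EuclideanSpace.norm_sq_eq_add_integral_inner hk hΔ, add_sub_cancel_left,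
    ← intervalIntegral.integral_const_mul, ← Real.norm_eq_abs]
  refine intervalIntegral.norm_integral_le_of_norm_le hu.1 ?_ (hC'.const_mul _)
  filter_upwards [hae] with v hv hvI
  obtain ⟨hvT, hgv, hhv⟩ := hv hvI
  have hφv : ‖Y v - Z v‖ ≤ r := hφr v (Ioc_subset_Icc_self hvI)
  have hpair := abs_inner_sub_le_of_mem_filippovReg hρ (hC0 v) hO hB hvT (hφv.trans_lt hr) hgv hhv
  have hmono := mul_le_mul_of_nonneg_left (hρ.mul_apply_le_mul_apply (norm_nonneg _) hφv hr)
    (hC0 v)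
  rw [Real.norm_eq_abs, abs_mul, abs_two]
  linarith

end FilippovSol

namespace IsFilippovFlow

variable {n : ℕ} {V : ℝ → EuclideanSpace ℝ (Fin n) → EuclideanSpace ℝ (Fin n)} {T s t : ℝ}
  {X : ℝ → ℝ → EuclideanSpace ℝ (Fin n) → EuclideanSpace ℝ (Fin n)}

lemma apply_apply (hX : IsFilippovFlow V T X) (hs : s ∈ Icc 0 T) (ht : t ∈ Icc 0 T)
    (x : EuclideanSpace ℝ (Fin n)) : X t s (X s t x) = x := by
  obtain ⟨hxs, hx, -⟩ := hX s hs x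
  obtain ⟨-, -, huniq⟩ := hX t ht (X s t x)
  rw [← huniq _ hx rfl s hs, hxs]

lemma uniformContinuous {ρ C D : ℝ → ℝ} (hρ : OsgoodModulus ρ) (hC : IntegrableOn C (Ioo 0 T))
    (hC0 : ∀ t, 0 ≤ C t) (hO : OsgoodCond V C ρ T) (hB : BoundCond V D T)
    (hX : IsFilippovFlow V T X) (hs : s ∈ Icc 0 T) (ht : t ∈ Icc 0 T) :
    UniformContinuous (X s t) := by
  have hT : 0 ≤ T := hs.1.trans hs.2
  have hCi : IntervalIntegrable C volume 0 T :=
    (intervalIntegrable_iff_integrableOn_Ioo_of_le hT).2 hC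
  rw [Metric.uniformContinuous_iff]
  intro ε hε
  obtain ⟨δ, hδ, hδε⟩ := hρ.exists_forall_le_of_osgoodEnergyBound
    (show 0 < min (ε / 2) (1 / 2) by positivity) ((min_le_right _ _).trans_lt one_half_lt_one)
    (∫ v in (0 : ℝ)..T, C v)
  refine ⟨δ, hδ, fun x y hxy => ?_⟩
  obtain ⟨hxs, hx, -⟩ := hX s hs x
  obtain ⟨hys, hy, -⟩ := hX s hs y
  have ha : 0 ≤ min s t := le_min hs.1 ht.1
  have hb : max s t ≤ T := max_le hs.2 ht.2
  have hφs : ‖X s s x - X s s y‖ < δ := by rwa [hxs, hys, ← dist_eq_norm]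
  have h := hδε ((hx.osgoodEnergyBound_norm_sub hρ hC hC0 hO hB hy).mono ha hb)
    (((hx.continuousOn hT).sub (hy.continuousOn hT)).norm.mono (Icc_subset_Icc ha hb))
    (fun v _ => hC0 v) (hCi.mono_set (uIcc_subset_uIcc (Icc_subset_uIcc ⟨ha, min_le_max.trans hb⟩)
      (Icc_subset_uIcc ⟨ha.trans min_le_max, hb⟩)))
    (intervalIntegral.integral_mono_interval ha min_le_max hb
      (Eventually.of_forall fun v => hC0 v) hCi)
    (by rcases le_total s t with hst | hts
        · exact Or.inl (by rwa [min_eq_left hst])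
        · exact Or.inr (by rwa [max_eq_left hts]))
    t ⟨min_le_right _ _, le_max_right _ _⟩
  rw [dist_eq_norm]
  linarith [min_le_left (ε / 2) (1 / 2)]

end IsFilippovFlow

theorem filippov_flow_homeomorph_general {n : ℕ} {T : ℝ}
    {V : ℝ → EuclideanSpace ℝ (Fin n) → EuclideanSpace ℝ (Fin n)}
    {ρ C D : ℝ → ℝ} (hρ : OsgoodModulus ρ)
    (hC : IntegrableOn C (Ioo 0 T)) (hC0 : ∀ t, 0 ≤ C t)
    (hO : OsgoodCond V C ρ T) (hB : BoundCond V D T)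
    {X : ℝ → ℝ → EuclideanSpace ℝ (Fin n) → EuclideanSpace ℝ (Fin n)}
    (hX : IsFilippovFlow V T X) :
    ∀ s ∈ Icc (0:ℝ) T, ∀ t ∈ Icc (0:ℝ) T,
      ∃ e : EuclideanSpace ℝ (Fin n) ≃ₜ EuclideanSpace ℝ (Fin n),
        (∀ x, e x = X s t x) ∧ (∀ x, e.symm x = X t s x) := by
  intro s hs t ht
  exact ⟨{ toFun := X s t
           invFun := X t s
           left_inv := hX.apply_apply hs ht
           right_inv := hX.apply_apply ht hs
           continuous_toFun := (hX.uniformContinuous hρ hC hC0 hO hB hs ht).continuous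
           continuous_invFun := (hX.uniformContinuous hρ hC hC0 hO hB ht hs).continuous },
    fun _ => rfl, fun _ => rfl⟩

/-- Under (O) and (B), for each pair of times `s, t ∈ [0,T]` the flow map
`x ↦ X(s,t,x)` is a homeomorphism of `ℝ^d`, with inverse `x ↦ X(t,s,x)`. -/
theorem filippov_flow_homeomorph {n : ℕ} {T : ℝ} (hT : 0 < T)
    {V : ℝ → EuclideanSpace ℝ (Fin n) → EuclideanSpace ℝ (Fin n)}
    {ρ C D : ℝ → ℝ} (hρ : OsgoodModulus ρ)
    (hC : IntegrableOn C (Ioo 0 T)) (hC0 : ∀ t, 0 ≤ C t)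
    (hO : OsgoodCond V C ρ T) (hB : BoundCond V D T)
    {X : ℝ → ℝ → EuclideanSpace ℝ (Fin n) → EuclideanSpace ℝ (Fin n)}
    (hX : IsFilippovFlow V T X) :
    ∀ s ∈ Icc (0:ℝ) T, ∀ t ∈ Icc (0:ℝ) T,
      ∃ e : EuclideanSpace ℝ (Fin n) ≃ₜ EuclideanSpace ℝ (Fin n),
        (∀ x, e x = X s t x) ∧ (∀ x, e.symm x = X t s x) :=
  filippov_flow_homeomorph_general hρ hC hC0 hO hB hX
end
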